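/- arXiv:1605.07573 — 3 statements merged into one kernel-verified Lean document; each statement's English description precedes it below -/
import Mathlib

section
/- Let D = {(u,v) ∈ ℝ² : 1 < cosh u < √2}, and define x : D → ℝ³ by x(u,v) = (cosh u · cosh v, cosh u · sinh v, F(u)) where F(u) = ∫₀ᵘ √(2 − cosh² t) dt. Then for all (u,v) ∈ D the partial derivatives satisfy B(∂_u x, ∂_u x) = −1, B(∂_u x, ∂_v x) = 0, and B(∂_v x, ∂_v x) = cosh² u, where B is the index-2 bilinear form B(x,y) = −x₁y₁ + x₂y₂ − x₃y₃ on ℝ³. Thus x is an isometric immersion into ℝ³₂ of the constant curvature K = 1 metric ds² = −du² + cosh²u dv². -/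
/-- The index-2 bilinear form `B(x,y) = −x₁y₁ + x₂y₂ − x₃y₃` on `ℝ³`. -/
def formR32 (x y : ℝ × ℝ × ℝ) : ℝ :=
  -(x.1 * y.1) + x.2.1 * y.2.1 - x.2.2 * y.2.2

/-- The parametrization `x(u,v) = (cosh u cosh v, cosh u sinh v, ∫₀ᵘ √(2 − cosh²t) dt)`. -/
noncomputable def xKoneR32 : ℝ × ℝ → ℝ × ℝ × ℝ := fun p =>
  (Real.cosh p.1 * Real.cosh p.2, Real.cosh p.1 * Real.sinh p.2,
    ∫ t in (0 : ℝ)..p.1, Real.sqrt (2 - Real.cosh t ^ 2))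

open Real

lemma hasDerivAt_xKoneR32_fst (u v : ℝ) :
    HasDerivAt (fun t => xKoneR32 (t, v))
      (sinh u * cosh v, sinh u * sinh v, √(2 - cosh u ^ 2)) u := by
  have hF : Continuous fun t => √(2 - cosh t ^ 2) := by fun_prop
  dsimp only [xKoneR32]
  exact ((hasDerivAt_cosh u).mul_const _).prodMk
    (((hasDerivAt_cosh u).mul_const _).prodMk (hF.integral_hasStrictDerivAt 0 u).hasDerivAt)

lemma hasDerivAt_xKoneR32_snd (u v : ℝ) :
    HasDerivAt (fun t => xKoneR32 (u, t)) (cosh u * sinh v, cosh u * cosh v, 0) v := by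
  dsimp only [xKoneR32]
  exact ((hasDerivAt_cosh v).const_mul _).prodMk
    (((hasDerivAt_sinh v).const_mul _).prodMk (hasDerivAt_const _ _))

lemma sq_sqrt_two_sub_cosh_sq {u : ℝ} (hu : cosh u < √2) :
    √(2 - cosh u ^ 2) ^ 2 = 2 - cosh u ^ 2 :=
  sq_sqrt (sub_nonneg.2 ((lt_sqrt (cosh_pos u).le).1 hu).le)

theorem Kone_immersion_R32_general (u v : ℝ)
    (hu₂ : Real.cosh u < Real.sqrt 2) :
    formR32 (deriv (fun t => xKoneR32 (t, v)) u) (deriv (fun t => xKoneR32 (t, v)) u) = -1 ∧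
    formR32 (deriv (fun t => xKoneR32 (t, v)) u) (deriv (fun t => xKoneR32 (u, t)) v) = 0 ∧
    formR32 (deriv (fun t => xKoneR32 (u, t)) v) (deriv (fun t => xKoneR32 (u, t)) v)
      = Real.cosh u ^ 2 := by
  rw [(hasDerivAt_xKoneR32_fst u v).deriv, (hasDerivAt_xKoneR32_snd u v).deriv]
  have hF := sq_sqrt_two_sub_cosh_sq hu₂
  have hu := cosh_sq_sub_sinh_sq u
  have hv := cosh_sq_sub_sinh_sq v
  simp only [formR32]
  refine ⟨?_, ?_, ?_⟩
  · -- `F'(u)² = 2 - cosh² u` is chosen so that `-sinh² u - F'(u)² = -1`.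
    linear_combination (-sinh u ^ 2) * hv - hF + hu
  · ring
  · linear_combination cosh u ^ 2 * hv

/-- On `D = {(u,v) : 1 < cosh u < √2}` the map `xKoneR32` is an isometric immersion
into `ℝ³₂` of the metric `ds² = −du² + cosh²u dv²` (K = 1). -/
theorem Kone_immersion_R32 (u v : ℝ)
    (hu₁ : 1 < Real.cosh u) (hu₂ : Real.cosh u < Real.sqrt 2) :
    formR32 (deriv (fun t => xKoneR32 (t, v)) u) (deriv (fun t => xKoneR32 (t, v)) u) = -1 ∧
    formR32 (deriv (fun t => xKoneR32 (t, v)) u) (deriv (fun t => xKoneR32 (u, t)) v) = 0 ∧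
    formR32 (deriv (fun t => xKoneR32 (u, t)) v) (deriv (fun t => xKoneR32 (u, t)) v)
      = Real.cosh u ^ 2 :=
  Kone_immersion_R32_general u v hu₂
end

section
/- Let D = (−π/2, π/2) × ℝ, and define x : D → ℝ³ by x(τ,ϑ) = (F(τ), cos τ · cos ϑ, cos τ · sin ϑ) where F(τ) = ∫₀^τ √(1 + sin² t) dt. Then for all (τ,ϑ) ∈ D the partial derivatives satisfy B(∂_τ x, ∂_τ x) = 1, B(∂_τ x, ∂_ϑ x) = 0, and B(∂_ϑ x, ∂_ϑ x) = −cos² τ, where B is the index-2 bilinear form B(x,y) = x₁y₁ − x₂y₂ − x₃y₃ on ℝ³. Thus x is an isometric immersion into ℝ³₂ of the constant curvature K = 1 metric ds² = dτ² − cos²τ dϑ². -/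
/-- The index-2 bilinear form `B(x,y) = x₁y₁ − x₂y₂ − x₃y₃` on `ℝ³`. -/
def formR32' (x y : ℝ × ℝ × ℝ) : ℝ :=
  x.1 * y.1 - x.2.1 * y.2.1 - x.2.2 * y.2.2

/-- The parametrization `x(τ,ϑ) = (∫₀^τ √(1 + sin²t) dt, cos τ cos ϑ, cos τ sin ϑ)`. -/
noncomputable def xKoneR32time : ℝ × ℝ → ℝ × ℝ × ℝ := fun p =>
  (∫ t in (0 : ℝ)..p.1, Real.sqrt (1 + Real.sin t ^ 2),
    Real.cos p.1 * Real.cos p.2, Real.cos p.1 * Real.sin p.2)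

/-!
`x` is the surface of revolution `(f τ, r τ cos ϑ, r τ sin ϑ)` about the first axis with
`f = ∫₀^τ √(1 + sin² t) dt` and `r = cos`. For any such surface the coordinate curves are
`B`-orthogonal, `B(∂_ϑ x, ∂_ϑ x) = -r²` and `B(∂_τ x, ∂_τ x) = f'² - r'²`; the profile `f` is
chosen exactly so that `f'² - r'² = (1 + sin² τ) - sin² τ = 1`.
-/

open Real

noncomputable def surfaceOfRevolution (f r : ℝ → ℝ) (p : ℝ × ℝ) : ℝ × ℝ × ℝ :=
  (f p.1, r p.1 * cos p.2, r p.1 * sin p.2)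

section SurfaceOfRevolution

variable {f r : ℝ → ℝ} {f' r' : ℝ}

theorem hasDerivAt_surfaceOfRevolution_fst {τ : ℝ} (hf : HasDerivAt f f' τ)
    (hr : HasDerivAt r r' τ) (ϑ : ℝ) :
    HasDerivAt (fun t => surfaceOfRevolution f r (t, ϑ)) (f', r' * cos ϑ, r' * sin ϑ) τ :=
  hf.prodMk ((hr.mul_const (cos ϑ)).prodMk (hr.mul_const (sin ϑ)))

theorem hasDerivAt_surfaceOfRevolution_snd (f r : ℝ → ℝ) (τ ϑ : ℝ) :
    HasDerivAt (fun t => surfaceOfRevolution f r (τ, t))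
      (0, r τ * -sin ϑ, r τ * cos ϑ) ϑ :=
  (hasDerivAt_const ϑ (f τ)).prodMk
    (((hasDerivAt_cos ϑ).const_mul (r τ)).prodMk ((hasDerivAt_sin ϑ).const_mul (r τ)))

theorem formR32'_surfaceOfRevolution {τ : ℝ} (hf : HasDerivAt f f' τ)
    (hr : HasDerivAt r r' τ) (ϑ : ℝ) :
    formR32' (deriv (fun t => surfaceOfRevolution f r (t, ϑ)) τ)
        (deriv (fun t => surfaceOfRevolution f r (t, ϑ)) τ) = f' ^ 2 - r' ^ 2 ∧
    formR32' (deriv (fun t => surfaceOfRevolution f r (t, ϑ)) τ)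
        (deriv (fun t => surfaceOfRevolution f r (τ, t)) ϑ) = 0 ∧
    formR32' (deriv (fun t => surfaceOfRevolution f r (τ, t)) ϑ)
        (deriv (fun t => surfaceOfRevolution f r (τ, t)) ϑ) = -r τ ^ 2 := by
  rw [(hasDerivAt_surfaceOfRevolution_fst hf hr ϑ).deriv,
    (hasDerivAt_surfaceOfRevolution_snd f r τ ϑ).deriv]
  simp only [formR32']
  refine ⟨?_, by ring, ?_⟩
  · linear_combination (-r' ^ 2) * sin_sq_add_cos_sq ϑ
  · linear_combination (-r τ ^ 2) * sin_sq_add_cos_sq ϑ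

end SurfaceOfRevolution

theorem hasDerivAt_integral_sqrt_one_add_sin_sq (τ : ℝ) :
    HasDerivAt (fun u => ∫ t in (0 : ℝ)..u, √(1 + sin t ^ 2)) √(1 + sin τ ^ 2) τ :=
  (Continuous.integral_hasStrictDerivAt (by fun_prop) 0 τ).hasDerivAt

theorem xKoneR32time_eq_surfaceOfRevolution :
    xKoneR32time = surfaceOfRevolution (fun u => ∫ t in (0 : ℝ)..u, √(1 + sin t ^ 2)) cos :=
  rfl

theorem Kone_immersion_R32_timelike_general (τ ϑ : ℝ) :
    formR32' (deriv (fun t => xKoneR32time (t, ϑ)) τ)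
        (deriv (fun t => xKoneR32time (t, ϑ)) τ) = 1 ∧
    formR32' (deriv (fun t => xKoneR32time (t, ϑ)) τ)
        (deriv (fun t => xKoneR32time (τ, t)) ϑ) = 0 ∧
    formR32' (deriv (fun t => xKoneR32time (τ, t)) ϑ)
        (deriv (fun t => xKoneR32time (τ, t)) ϑ) = -Real.cos τ ^ 2 := by
  rw [xKoneR32time_eq_surfaceOfRevolution]
  obtain ⟨hττ, hτϑ, hϑϑ⟩ := formR32'_surfaceOfRevolution
    (hasDerivAt_integral_sqrt_one_add_sin_sq τ) (hasDerivAt_cos τ) ϑ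
  refine ⟨?_, hτϑ, hϑϑ⟩
  rw [hττ, sq_sqrt (by positivity)]
  ring

/-- On `D = (−π/2, π/2) × ℝ` the map `xKoneR32time` is an isometric immersion
into `ℝ³₂` of the metric `ds² = dτ² − cos²τ dϑ²` (K = 1). -/
theorem Kone_immersion_R32_timelike (τ ϑ : ℝ)
    (hτ₁ : -(Real.pi / 2) < τ) (hτ₂ : τ < Real.pi / 2) :
    formR32' (deriv (fun t => xKoneR32time (t, ϑ)) τ)
        (deriv (fun t => xKoneR32time (t, ϑ)) τ) = 1 ∧
    formR32' (deriv (fun t => xKoneR32time (t, ϑ)) τ)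
        (deriv (fun t => xKoneR32time (τ, t)) ϑ) = 0 ∧
    formR32' (deriv (fun t => xKoneR32time (τ, t)) ϑ)
        (deriv (fun t => xKoneR32time (τ, t)) ϑ) = -Real.cos τ ^ 2 :=
  Kone_immersion_R32_timelike_general τ ϑ
end

section
/- Let D = (−π/2, π/2) × ℝ, and define x : D → ℝ³ by x(u,v) = (cos u · cos v, cos u · sin v, F(u)) where F(u) = ∫₀ᵘ √(1 + sin² t) dt. Then for all (u,v) ∈ D the partial derivatives satisfy ⟨∂_u x, ∂_u x⟩₁ = −1, ⟨∂_u x, ∂_v x⟩₁ = 0, and ⟨∂_v x, ∂_v x⟩₁ = cos² u. Thus x is an isometric immersion into 𝕃³ of the constant curvature K = −1 metric ds² = −du² + cos²u dv². -/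
/-- The Minkowski bilinear form of index 1 on `ℝ³`: `⟨x,y⟩₁ = x₁y₁ + x₂y₂ − x₃y₃`. -/
def minkowskiForm (x y : ℝ × ℝ × ℝ) : ℝ :=
  x.1 * y.1 + x.2.1 * y.2.1 - x.2.2 * y.2.2

/-- The parametrization `x(u,v) = (cos u cos v, cos u sin v, ∫₀ᵘ √(1 + sin²t) dt)`. -/
noncomputable def xKnegL3 : ℝ × ℝ → ℝ × ℝ × ℝ := fun p =>
  (Real.cos p.1 * Real.cos p.2, Real.cos p.1 * Real.sin p.2,
    ∫ t in (0 : ℝ)..p.1, Real.sqrt (1 + Real.sin t ^ 2))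

open Real

lemma hasDerivAt_xKnegL3_fst (u v : ℝ) :
    HasDerivAt (fun t => xKnegL3 (t, v))
      (-sin u * cos v, -sin u * sin v, √(1 + sin u ^ 2)) u := by
  dsimp only [xKnegL3]
  exact ((hasDerivAt_cos u).mul_const _).prodMk <| ((hasDerivAt_cos u).mul_const _).prodMk <|
    (Continuous.integral_hasStrictDerivAt (by fun_prop) 0 u).hasDerivAt

lemma hasDerivAt_xKnegL3_snd (u v : ℝ) :
    HasDerivAt (fun t => xKnegL3 (u, t)) (cos u * -sin v, cos u * cos v, 0) v := by
  dsimp only [xKnegL3]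
  exact ((hasDerivAt_cos v).const_mul _).prodMk <| ((hasDerivAt_sin v).const_mul _).prodMk <|
    hasDerivAt_const (F := ℝ) _ _

theorem Kneg_immersion_L3_spacelike_general (u v : ℝ) :
    minkowskiForm (deriv (fun t => xKnegL3 (t, v)) u)
        (deriv (fun t => xKnegL3 (t, v)) u) = -1 ∧
    minkowskiForm (deriv (fun t => xKnegL3 (t, v)) u)
        (deriv (fun t => xKnegL3 (u, t)) v) = 0 ∧
    minkowskiForm (deriv (fun t => xKnegL3 (u, t)) v)
        (deriv (fun t => xKnegL3 (u, t)) v) = Real.cos u ^ 2 := by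
  rw [(hasDerivAt_xKnegL3_fst u v).deriv, (hasDerivAt_xKnegL3_snd u v).deriv]
  have hsqrt : √(1 + sin u ^ 2) ^ 2 = 1 + sin u ^ 2 := sq_sqrt (by positivity)
  simp only [minkowskiForm]
  refine ⟨?_, ?_, ?_⟩
  · linear_combination sin u ^ 2 * sin_sq_add_cos_sq v - hsqrt
  · ring
  · linear_combination cos u ^ 2 * sin_sq_add_cos_sq v

/-- On `D = (−π/2, π/2) × ℝ` the map `xKnegL3` is an isometric immersion into `𝕃³`
of the metric `ds² = −du² + cos²u dv²` (K = −1). -/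
theorem Kneg_immersion_L3_spacelike (u v : ℝ)
    (hu₁ : -(Real.pi / 2) < u) (hu₂ : u < Real.pi / 2) :
    minkowskiForm (deriv (fun t => xKnegL3 (t, v)) u)
        (deriv (fun t => xKnegL3 (t, v)) u) = -1 ∧
    minkowskiForm (deriv (fun t => xKnegL3 (t, v)) u)
        (deriv (fun t => xKnegL3 (u, t)) v) = 0 ∧
    minkowskiForm (deriv (fun t => xKnegL3 (u, t)) v)
        (deriv (fun t => xKnegL3 (u, t)) v) = Real.cos u ^ 2 :=
  Kneg_immersion_L3_spacelike_general u v
end
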